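/- Let G be a graph with a cut-vertex v, and let C_1,...,C_k be the connected components of G−v. If S_i is an MEG-set of the induced subgraph G[C_i ∪ {v}] for each i, then (S_1 ∪ ... ∪ S_k) \ {v} is an MEG-set of G. -/

import Mathlib

open SimpleGraph

/-- Two vertices `x` and `y` monitor an edge `e` in `G`: there is a shortest path between
them, and `e` lies on every shortest path between `x` and `y`. -/
def Monitors {V : Type*} (G : SimpleGraph V) (x y : V) (e : Sym2 V) : Prop :=
  (∃ p : G.Walk x y, p.IsPath ∧ p.length = G.dist x y) ∧
    ∀ p : G.Walk x y, p.IsPath → p.length = G.dist x y → e ∈ p.edges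

/-- `S` is a monitoring edge-geodetic set of `G`. -/
def IsMEGSet {V : Type*} (G : SimpleGraph V) (S : Set V) : Prop :=
  ∀ e ∈ G.edgeSet, ∃ x ∈ S, ∃ y ∈ S, Monitors G x y e

/-- The minimum size of a monitoring edge-geodetic set of `G`. -/
noncomputable def megNum {V : Type*} (G : SimpleGraph V) : ℕ :=
  sInf {n | ∃ S : Set V, IsMEGSet G S ∧ S.ncard = n}

/-- The set of leaves (degree-1 vertices) of `G`. -/
def leaves {V : Type*} (G : SimpleGraph V) : Set V :=
  {v | (G.neighborSet v).ncard = 1}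


/-- `S` is an MEG-set of the subgraph of `G` induced on `s` (with `S ⊆ s`). -/
def IsMEGSetOn {V : Type*} (G : SimpleGraph V) (s S : Set V) : Prop :=
  S ⊆ s ∧ IsMEGSet (G.induce s) {x : ↥s | (x : V) ∈ S}

/-! A path meets `v` at most once, so every path of `G` between two vertices of `C ∪ {v}` stays
in `C ∪ {v}`; hence `G[C ∪ {v}]` is isometric in `G`, and a pair of `S_C` monitoring an edge
there monitors it in `G`. A monitoring pair `v, y` is replaced by `x, y` with `x ∈ S_C' \ {v}`
for another component `C'` (such `x` exists since `G[C' ∪ {v}]` has an edge): every `x`–`y`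
path passes through `v`, so each shortest one ends with a shortest `v`–`y` path. -/

namespace SimpleGraph.Walk

variable {V : Type*} {G : SimpleGraph V} {s : Set V} {u w : V}

@[simp]
lemma length_induce (p : G.Walk u w) (hp : ∀ z ∈ p.support, z ∈ s) :
    (p.induce s hp).length = p.length := by
  induction p <;> simp [*]

lemma map_edges_induce (p : G.Walk u w) (hp : ∀ z ∈ p.support, z ∈ s) :
    (p.induce s hp).edges.map (Sym2.map (↑)) = p.edges := by
  induction p <;> simp [*]

lemma IsPath.induce {p : G.Walk u w} (hpath : p.IsPath) (hp : ∀ z ∈ p.support, z ∈ s) :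
    (p.induce s hp).IsPath := by
  rw [← isPath_map_iff_of_injective (f := (Embedding.induce s).toHom) Subtype.val_injective,
    map_induce]
  exact hpath

lemma IsPath.eq_of_mem_support_takeUntil_of_mem_support_dropUntil [DecidableEq V]
    {x y : V} {p : G.Walk u w} (hp : p.IsPath) (hx : x ∈ p.support)
    (hyt : y ∈ (p.takeUntil x hx).support) (hyd : y ∈ (p.dropUntil x hx).support) : y = x := by
  have hnd : ((p.takeUntil x hx).append (p.dropUntil x hx)).support.Nodup := by
    rw [p.take_spec hx]
    exact hp.support_nodup
  rw [support_append] at hnd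
  rw [← cons_tail_support] at hyd
  rcases List.mem_cons.1 hyd with rfl | hyd
  · rfl
  · exact absurd hyd (List.disjoint_of_nodup_append hnd hyt)

end SimpleGraph.Walk

lemma SimpleGraph.ConnectedComponent.exists_ne_of_not_connected {V : Type*} {G : SimpleGraph V}
    (h : ¬ G.Connected) (c : G.ConnectedComponent) : ∃ c', c' ≠ c := by
  by_contra! hall
  obtain ⟨u, -⟩ := c.exists_rep
  exact h ((connected_iff_exists_forall_reachable G).2
    ⟨u, fun w => ConnectedComponent.exact ((hall _).trans (hall _).symm)⟩)

namespace Monitors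

variable {V : Type*} {G : SimpleGraph V} {x y : V} {e : Sym2 V}

lemma symm (h : Monitors G x y e) : Monitors G y x e := by
  obtain ⟨⟨p, hp, hlen⟩, hall⟩ := h
  refine ⟨⟨p.reverse, hp.reverse, by rw [Walk.length_reverse, hlen, dist_comm]⟩,
    fun q hq hqlen => ?_⟩
  simpa using hall q.reverse hq.reverse (by rw [Walk.length_reverse, hqlen, dist_comm])

lemma ne (h : Monitors G x y e) : x ≠ y := by
  rintro rfl
  simpa using h.2 Walk.nil Walk.IsPath.nil (by simp)

lemma of_forall_mem_support {v : V} (h : Monitors G v y e) (hxy : G.Reachable x y)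
    (hsep : ∀ p : G.Walk x y, v ∈ p.support) : Monitors G x y e := by
  classical
  refine ⟨hxy.exists_path_of_dist, fun p hp hlen => ?_⟩
  have hv := hsep p
  have hsplit : (p.takeUntil v hv).length + (p.dropUntil v hv).length = p.length := by
    rw [← Walk.length_append, p.take_spec hv]
  have htri := (p.takeUntil v hv).reachable.dist_triangle_left y
  have hx := dist_le (p.takeUntil v hv)
  have hy := dist_le (p.dropUntil v hv)
  have hdrop : (p.dropUntil v hv).length = G.dist v y := by omega
  exact p.edges_dropUntil_subset_edges hv (h.2 _ (hp.dropUntil hv) hdrop)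

end Monitors

lemma IsMEGSet.exists_mem_ne {V : Type*} {G : SimpleGraph V} {S : Set V} (hS : IsMEGSet G S)
    {a b : V} (hab : G.Adj a b) (w : V) : ∃ x ∈ S, x ≠ w := by
  obtain ⟨x, hx, y, hy, hmon⟩ := hS s(a, b) hab
  by_cases hxw : x = w
  · exact ⟨y, hy, fun hyw => hmon.ne (hxw.trans hyw.symm)⟩
  · exact ⟨x, hx, hxw⟩

section induce

variable {V : Type*} {G : SimpleGraph V} {s : Set V} {x y : s}

lemma dist_induce_eq (hr : G.Reachable x y)
    (hs : ∀ p : G.Walk x y, p.IsPath → ∀ z ∈ p.support, z ∈ s) :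
    (G.induce s).dist x y = G.dist x y := by
  obtain ⟨p, hp, hlen⟩ := hr.exists_path_of_dist
  refine le_antisymm ?_ ?_
  · calc (G.induce s).dist x y ≤ (p.induce s (hs p hp)).length := dist_le _
      _ = G.dist x y := by rw [Walk.length_induce, hlen]
  · obtain ⟨q, hq⟩ := (p.induce s (hs p hp)).reachable.exists_walk_length_eq_dist
    calc G.dist x y ≤ (q.map (Embedding.induce s).toHom).length := dist_le _
      _ = (G.induce s).dist x y := by rw [Walk.length_map, hq]

lemma Monitors.of_induce {e : Sym2 s} (h : Monitors (G.induce s) x y e)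
    (hs : ∀ p : G.Walk x y, p.IsPath → ∀ z ∈ p.support, z ∈ s) :
    Monitors G x y (e.map (↑)) := by
  obtain ⟨⟨q, -, -⟩, hall⟩ := h
  have hr : G.Reachable x y := (q.map (Embedding.induce s).toHom).reachable
  refine ⟨hr.exists_path_of_dist, fun p hp hlen => ?_⟩
  have hq := hall (p.induce s (hs p hp)) (hp.induce _)
    (by rw [Walk.length_induce, hlen, dist_induce_eq hr hs])
  rw [← p.map_edges_induce (hs p hp)]
  exact List.mem_map_of_mem hq

end induce

section branch

variable {V : Type*} {G : SimpleGraph V} {v : V} {c c' : (G.induce {u | u ≠ v}).ConnectedComponent}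
  {u w : V}

/-- The vertex set `C ∪ {v}` of the paper's `G[C ∪ {v}]`, for a component `C` of `G - v`. -/
def branch (G : SimpleGraph V) (v : V) (c : (G.induce {u | u ≠ v}).ConnectedComponent) : Set V :=
  {u : V | ∃ h : u ≠ v, (G.induce {u | u ≠ v}).connectedComponentMk ⟨u, h⟩ = c} ∪ {v}

lemma self_mem_branch (c : (G.induce {u | u ≠ v}).ConnectedComponent) : v ∈ branch G v c :=
  Or.inr rfl

lemma mem_branch_iff (hu : u ≠ v) :
    u ∈ branch G v c ↔ (G.induce {u | u ≠ v}).connectedComponentMk ⟨u, hu⟩ = c := by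
  simp [branch, hu]

lemma mem_branch_of_walk (hu : u ∈ branch G v c) (p : G.Walk u w) (hv : v ∉ p.support) :
    w ∈ branch G v c := by
  have huv : u ≠ v := fun h => hv (h ▸ p.start_mem_support)
  have hwv : w ≠ v := fun h => hv (h ▸ p.end_mem_support)
  rw [mem_branch_iff huv] at hu
  rw [mem_branch_iff hwv, ← hu]
  exact ConnectedComponent.sound
    (p.induce {u | u ≠ v} fun z hz hzv => hv (hzv ▸ hz)).reachable.symm

lemma exists_mem_branch_of_adj (hab : G.Adj u w) :
    ∃ c, u ∈ branch G v c ∧ w ∈ branch G v c := by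
  by_cases huv : u = v
  · have hwv : w ≠ v := huv ▸ hab.ne.symm
    exact ⟨_, Set.mem_of_eq_of_mem huv (self_mem_branch _), (mem_branch_iff hwv).2 rfl⟩
  refine ⟨_, (mem_branch_iff huv).2 rfl, ?_⟩
  by_cases hwv : w = v
  · exact Set.mem_of_eq_of_mem hwv (self_mem_branch _)
  exact mem_branch_of_walk ((mem_branch_iff huv).2 rfl) hab.toWalk
    (by simp [Ne.symm huv, Ne.symm hwv])

lemma SimpleGraph.Walk.IsPath.support_subset_branch {p : G.Walk u w} (hp : p.IsPath)
    (hu : u ∈ branch G v c) (hw : w ∈ branch G v c) : ∀ z ∈ p.support, z ∈ branch G v c := by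
  classical
  intro z hz
  by_cases hzv : z = v
  · exact Set.mem_of_eq_of_mem hzv (self_mem_branch c)
  by_cases hvt : v ∈ (p.takeUntil z hz).support
  · have hvd : v ∉ (p.dropUntil z hz).support := fun hvd =>
      hzv (hp.eq_of_mem_support_takeUntil_of_mem_support_dropUntil hz hvt hvd).symm
    exact mem_branch_of_walk hw (p.dropUntil z hz).reverse (by simpa using hvd)
  · exact mem_branch_of_walk hu (p.takeUntil z hz) hvt

lemma mem_support_of_mem_branch (hcc' : c ≠ c') (hu : u ∈ branch G v c)
    (hw : w ∈ branch G v c') (hwv : w ≠ v) (p : G.Walk u w) : v ∈ p.support := by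
  by_contra hv
  have hwc := mem_branch_of_walk hu p hv
  rw [mem_branch_iff hwv] at hw hwc
  exact hcc' (hwc.symm.trans hw)

lemma IsMEGSetOn.exists_mem_ne_of_branch (hG : G.Connected) {S : Set V}
    (hS : IsMEGSetOn G (branch G v c) S) : ∃ x ∈ S, x ≠ v := by
  obtain ⟨⟨u, huv⟩, hu⟩ := c.exists_rep
  have hub : u ∈ branch G v c := (mem_branch_iff huv).2 hu
  obtain ⟨p, hp⟩ := hG.exists_isPath u v
  let q := p.induce _ (hp.support_subset_branch hub (self_mem_branch c))
  have hq : ¬ q.Nil := Walk.not_nil_of_ne (by simpa using huv)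
  obtain ⟨x, hx, hxv⟩ := hS.2.exists_mem_ne (q.adj_snd hq) ⟨v, self_mem_branch c⟩
  exact ⟨x, hx, fun h => hxv (Subtype.ext h)⟩

end branch

lemma exists_monitors_of_monitors_cutVertex {V : Type*} {G : SimpleGraph V} (hG : G.Connected)
    {v y : V} (hcut : ¬ (G.induce {u | u ≠ v}).Connected)
    {S : (G.induce {u | u ≠ v}).ConnectedComponent → Set V}
    (hS : ∀ c, IsMEGSetOn G (branch G v c) (S c)) {c : (G.induce {u | u ≠ v}).ConnectedComponent}
    (hy : y ∈ branch G v c) (hyv : y ≠ v) {e : Sym2 V} (h : Monitors G v y e) :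
    ∃ x ∈ (⋃ c, S c) \ {v}, Monitors G x y e := by
  obtain ⟨c', hc'⟩ := ConnectedComponent.exists_ne_of_not_connected hcut c
  obtain ⟨x, hx, hxv⟩ := (hS c').exists_mem_ne_of_branch hG
  exact ⟨x, ⟨Set.mem_iUnion.2 ⟨c', hx⟩, hxv⟩,
    h.of_forall_mem_support (hG x y) (mem_support_of_mem_branch hc' ((hS c').1 hx) hy hyv)⟩

theorem cutVertex_union_MEG {V : Type*} (G : SimpleGraph V)
    (hG : G.Connected) (v : V)
    (hcut : ¬ (G.induce {u | u ≠ v}).Connected)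
    (S : (G.induce {u | u ≠ v}).ConnectedComponent → Set V)
    (hS : ∀ c, IsMEGSetOn G
      ({u : V | ∃ h : u ≠ v, (G.induce {u | u ≠ v}).connectedComponentMk ⟨u, h⟩ = c} ∪ {v})
      (S c)) :
    IsMEGSet G ((⋃ c, S c) \ {v}) := by
  change ∀ c, IsMEGSetOn G (branch G v c) (S c) at hS
  intro e he
  induction e using Sym2.ind with | _ a b => ?_
  obtain ⟨c, ha, hb⟩ := exists_mem_branch_of_adj (v := v) he
  obtain ⟨x, hx, y, hy, hmon⟩ := (hS c).2 s(⟨a, ha⟩, ⟨b, hb⟩) he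
  have hxy : Monitors G x y s(a, b) :=
    hmon.of_induce fun _ hp => hp.support_subset_branch x.2 y.2
  have hmem : ∀ z ∈ S c, z ≠ v → z ∈ (⋃ c, S c) \ {v} := fun z hz hzv =>
    ⟨Set.mem_iUnion.2 ⟨c, hz⟩, hzv⟩
  by_cases hxv : (x : V) = v
  · have hyv : (y : V) ≠ v := fun h => hxy.ne (hxv.trans h.symm)
    obtain ⟨x', hx', h⟩ := exists_monitors_of_monitors_cutVertex hG hcut hS y.2 hyv (hxv ▸ hxy)
    exact ⟨x', hx', y, hmem y hy hyv, h⟩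
  by_cases hyv : (y : V) = v
  · obtain ⟨y', hy', h⟩ := exists_monitors_of_monitors_cutVertex hG hcut hS x.2 hxv (hyv ▸ hxy.symm)
    exact ⟨y', hy', x, hmem x hx hxv, h⟩
  exact ⟨x, hmem x hx hxv, y, hmem y hy hyv, hxy⟩
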